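/- Let n, N ≥ 1, let λ_1,…,λ_n ≥ 0 with Σ_k λ_k = 1, let ρ := diag(λ_1,…,λ_n) (a possibly non-faithful diagonal density matrix), let A_1,…,A_N be Hermitian n×n complex matrices, and let m : [0,∞)×[0,∞) → ℝ satisfy 0 ≤ m(x,y) ≤ (x+y)/2 for all x,y ≥ 0. Then det G(m) ≤ det Cov, i.e. det{ Cov_{hj} − Σ_{k,l} m(λ_k,λ_l)·Re( ((A_h)₀)_{kl}·conj(((A_j)₀)_{kl}) ) } ≤ det{ Cov_{hj} }. -/

import Mathlib

/-!
For Hermitian `X, Y` the number `Re (X_kl · conj Y_kl)` is symmetric in `(k, l)`, so expanding the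
trace against the diagonal `ρ` and symmetrising gives
`Cov_hj = ∑ k l, (λ_k + λ_l)/2 · Re ((A_h)₀_kl · conj (A_j)₀_kl)`.
Hence `G` and `Cov - G` are nonnegative combinations of the real Gram matrices
`Re (z_h · conj z_j)`, so both are positive semidefinite, and `det` is monotone on the
positive semidefinite cone: if `Cov` is singular, a kernel vector of `Cov` also kills `G`;
otherwise, with `S = √Cov`, `det G = det Cov · det (S⁻¹ G S⁻¹)` and `0 ≤ S⁻¹ G S⁻¹ ≤ 1`.
-/

open Matrix
open scoped ComplexConjugate MatrixOrder

namespace Matrix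

variable {ι κ : Type*} [Fintype ι] [Fintype κ]

lemma posSemidef_of_re_mul_conj (z : ι → ℂ) :
    (of fun h j => (z h * conj (z j)).re).PosSemidef := by
  have hsum : (of fun h j => (z h * conj (z j)).re) =
      vecMulVec (fun h => (z h).re) (star fun h => (z h).re) +
        vecMulVec (fun h => (z h).im) (star fun h => (z h).im) := by
    ext h j
    simp [vecMulVec_apply, Complex.mul_re]
  rw [hsum]
  exact (posSemidef_vecMulVec_self_star _).add (posSemidef_vecMulVec_self_star _)

lemma posSemidef_of_sum_sum_mul_re_mul_conj (w : κ → κ → ℝ) (hw : ∀ k l, 0 ≤ w k l)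
    (z : ι → κ → κ → ℂ) :
    (of fun h j => ∑ k, ∑ l, w k l * (z h k l * conj (z j k l)).re).PosSemidef := by
  have hsum : (of fun h j => ∑ k, ∑ l, w k l * (z h k l * conj (z j k l)).re) =
      ∑ k, ∑ l, w k l • of fun h j => (z h k l * conj (z j k l)).re := by
    ext h j
    simp [sum_apply]
  rw [hsum]
  exact posSemidef_sum _ fun k _ => posSemidef_sum _ fun l _ =>
    (posSemidef_of_re_mul_conj fun h => z h k l).smul (hw k l)

lemma IsHermitian.sub_trace_mul_smul_one {R : Type*} [CommRing R] [StarRing R] [DecidableEq κ]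
    {A ρ : Matrix κ κ R} (hA : A.IsHermitian) (hρ : ρ.IsHermitian) :
    (A - trace (ρ * A) • (1 : Matrix κ κ R)).IsHermitian := by
  refine hA.sub ?_
  rw [IsHermitian, conjTranspose_smul, conjTranspose_one, ← trace_conjTranspose,
    conjTranspose_mul, hA.eq, hρ.eq, trace_mul_comm]

omit [Fintype κ] in
lemma IsHermitian.re_mul_conj_apply_comm {X Y : Matrix κ κ ℂ} (hX : X.IsHermitian)
    (hY : Y.IsHermitian) (k l : κ) :
    (X l k * conj (Y l k)).re = (X k l * conj (Y k l)).re := by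
  rw [← hX.apply k l, ← hY.apply k l]
  simp [Complex.mul_re]

lemma re_trace_diagonal_mul_mul [DecidableEq κ] (d : κ → ℝ) (X : Matrix κ κ ℂ)
    {Y : Matrix κ κ ℂ} (hY : Y.IsHermitian) :
    (trace (diagonal (fun k => (d k : ℂ)) * X * Y)).re =
      ∑ k, ∑ l, d k * (X k l * conj (Y k l)).re := by
  simp only [trace, diag_apply, Matrix.mul_assoc, diagonal_mul]
  simp only [mul_apply, Finset.mul_sum, Complex.re_sum]
  refine Finset.sum_congr rfl fun k _ => Finset.sum_congr rfl fun l _ => ?_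
  rw [← hY.apply k l, RCLike.star_def, Complex.conj_conj, Complex.re_ofReal_mul]

variable [DecidableEq ι]

lemma PosSemidef.det_le_one_of_le_one {C : Matrix ι ι ℝ} (hC : C.PosSemidef) (hC1 : C ≤ 1) :
    C.det ≤ 1 := by
  rw [hC.isHermitian.det_eq_prod_eigenvalues]
  refine Finset.prod_le_one (fun i _ => by simpa using hC.eigenvalues_nonneg i) fun i _ => ?_
  have := (le_algebraMap_iff_spectrum_le (r := (1 : ℝ)) (a := C) hC.isHermitian).1
    (by simpa using hC1) _ (hC.isHermitian.eigenvalues_mem_spectrum_real i)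
  simpa using this

lemma PosSemidef.det_le_det_of_le {A B : Matrix ι ι ℝ} (hA : A.PosSemidef) (hAB : A ≤ B) :
    A.det ≤ B.det := by
  have hB : B.PosSemidef := (hA.nonneg.trans hAB).posSemidef
  by_cases hBdet : B.det = 0
  · obtain ⟨v, hv, hBv⟩ := exists_mulVec_eq_zero_iff.mpr hBdet
    have hAv : star v ⬝ᵥ A *ᵥ v = 0 := by
      have := (le_iff.mp hAB).dotProduct_mulVec_nonneg v
      rw [sub_mulVec, dotProduct_sub, hBv, dotProduct_zero] at this
      linarith [hA.dotProduct_mulVec_nonneg v]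
    rw [hBdet, exists_mulVec_eq_zero_iff.mp ⟨v, hv, (hA.dotProduct_mulVec_zero_iff v).1 hAv⟩]
  · set S := CFC.sqrt B
    have hSS : S * S = B := CFC.sqrt_mul_sqrt_self B hB.nonneg
    have hS : IsUnit S.det :=
      isUnit_iff_ne_zero.mpr fun h => hBdet (by rw [← hSS, det_mul, h, zero_mul])
    have hSinv : S⁻¹ᴴ = S⁻¹ := by
      rw [conjTranspose_nonsing_inv, (CFC.sqrt_nonneg B).posSemidef.isHermitian]
    set C := S⁻¹ * A * S⁻¹
    have hC : C.PosSemidef := by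
      simpa only [hSinv] using hA.conjTranspose_mul_mul_same S⁻¹
    have hC1 : C ≤ 1 := by
      calc C ≤ S⁻¹ * B * S⁻¹ := by
            simpa only [star_eq_conjTranspose, hSinv] using
              star_left_conjugate_le_conjugate hAB S⁻¹
        _ = 1 := by rw [← hSS, ← mul_assoc, nonsing_inv_mul S hS, one_mul, mul_nonsing_inv S hS]
    have hAC : A = S * C * S := by
      simp only [C, ← mul_assoc, mul_nonsing_inv S hS, one_mul]
      rw [mul_assoc, nonsing_inv_mul S hS, mul_one]
    calc A.det = B.det * C.det := by rw [hAC, ← hSS]; simp only [det_mul]; ring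
      _ ≤ B.det * 1 := mul_le_mul_of_nonneg_left (hC.det_le_one_of_le_one hC1) hB.det_nonneg
      _ = B.det := mul_one _

end Matrix

lemma Finset.sum_sum_mul_eq_sum_sum_average_mul {κ : Type*} [Fintype κ] (d : κ → ℝ)
    {f : κ → κ → ℝ} (hf : ∀ k l, f l k = f k l) :
    ∑ k, ∑ l, d k * f k l = ∑ k, ∑ l, (d k + d l) / 2 * f k l := by
  have hswap : ∑ k, ∑ l, d k * f k l = ∑ k, ∑ l, d l * f k l := by
    rw [Finset.sum_comm]
    simp only [hf]
  simp only [add_div, add_mul, Finset.sum_add_distrib, div_mul_eq_mul_div, ← Finset.sum_div]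
  rw [← hswap]
  ring

theorem det_fisher_le_det_cov_nonfaithful_general
    (n N : ℕ)
    (lam : Fin n → ℝ) (hpos : ∀ k, 0 ≤ lam k)
    (A : Fin N → Matrix (Fin n) (Fin n) ℂ) (hA : ∀ h, (A h).IsHermitian)
    (m : ℝ → ℝ → ℝ)
    (hm : ∀ x y : ℝ, 0 ≤ x → 0 ≤ y → 0 ≤ m x y ∧ m x y ≤ (x + y) / 2)
    (ρ : Matrix (Fin n) (Fin n) ℂ)
    (hρ : ρ = Matrix.diagonal fun k => (lam k : ℂ))
    (A₀ : Fin N → Matrix (Fin n) (Fin n) ℂ)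
    (hA₀ : ∀ h, A₀ h = A h - (Matrix.trace (ρ * A h)) • (1 : Matrix (Fin n) (Fin n) ℂ))
    (Cov : Matrix (Fin N) (Fin N) ℝ)
    (hCov : ∀ h j, Cov h j = (Matrix.trace (ρ * A₀ h * A₀ j)).re)
    (G : Matrix (Fin N) (Fin N) ℝ)
    (hG : ∀ h j, G h j = Cov h j -
      ∑ k, ∑ l, m (lam k) (lam l) * (A₀ h k l * (starRingEnd ℂ) (A₀ j k l)).re) :
    G.det ≤ Cov.det := by
  have hρH : ρ.IsHermitian := by
    rw [hρ, isHermitian_diagonal_iff]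
    exact fun k => Complex.conj_ofReal _
  have hA₀H : ∀ h, (A₀ h).IsHermitian := fun h => by
    rw [hA₀ h]
    exact (hA h).sub_trace_mul_smul_one hρH
  have hCov' : ∀ h j, Cov h j =
      ∑ k, ∑ l, (lam k + lam l) / 2 * (A₀ h k l * conj (A₀ j k l)).re := fun h j => by
    rw [hCov, hρ, re_trace_diagonal_mul_mul _ _ (hA₀H j)]
    exact Finset.sum_sum_mul_eq_sum_sum_average_mul _ fun k l =>
      (hA₀H h).re_mul_conj_apply_comm (hA₀H j) k l
  have hGeq : G = of fun h j => ∑ k, ∑ l,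
      ((lam k + lam l) / 2 - m (lam k) (lam l)) * (A₀ h k l * conj (A₀ j k l)).re := by
    ext h j
    simp only [hG, hCov', of_apply, sub_mul, Finset.sum_sub_distrib]
  have hCovG : Cov - G = of fun h j => ∑ k, ∑ l,
      m (lam k) (lam l) * (A₀ h k l * conj (A₀ j k l)).re := by
    ext h j
    simp [hG]
  refine PosSemidef.det_le_det_of_le ?_ (le_iff.mpr ?_)
  · rw [hGeq]
    exact posSemidef_of_sum_sum_mul_re_mul_conj _
      (fun k l => by linarith [(hm _ _ (hpos k) (hpos l)).2]) _
  · rw [hCovG]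
    exact posSemidef_of_sum_sum_mul_re_mul_conj _ (fun k l => (hm _ _ (hpos k) (hpos l)).1) _

/-- The uncertainty-principle inequality `det G(m) ≤ det Cov` for a possibly
non-faithful diagonal density matrix (eigenvalues only nonnegative), with
`0 ≤ m(x,y) ≤ (x+y)/2` for all `x, y ≥ 0`. -/
theorem det_fisher_le_det_cov_nonfaithful
    (n N : ℕ) (hn : 1 ≤ n) (hN : 1 ≤ N)
    (lam : Fin n → ℝ) (hpos : ∀ k, 0 ≤ lam k) (hsum : ∑ k, lam k = 1)
    (A : Fin N → Matrix (Fin n) (Fin n) ℂ) (hA : ∀ h, (A h).IsHermitian)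
    (m : ℝ → ℝ → ℝ)
    (hm : ∀ x y : ℝ, 0 ≤ x → 0 ≤ y → 0 ≤ m x y ∧ m x y ≤ (x + y) / 2)
    (ρ : Matrix (Fin n) (Fin n) ℂ)
    (hρ : ρ = Matrix.diagonal fun k => (lam k : ℂ))
    (A₀ : Fin N → Matrix (Fin n) (Fin n) ℂ)
    (hA₀ : ∀ h, A₀ h = A h - (Matrix.trace (ρ * A h)) • (1 : Matrix (Fin n) (Fin n) ℂ))
    (Cov : Matrix (Fin N) (Fin N) ℝ)
    (hCov : ∀ h j, Cov h j = (Matrix.trace (ρ * A₀ h * A₀ j)).re)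
    (G : Matrix (Fin N) (Fin N) ℝ)
    (hG : ∀ h j, G h j = Cov h j -
      ∑ k, ∑ l, m (lam k) (lam l) * (A₀ h k l * (starRingEnd ℂ) (A₀ j k l)).re) :
    G.det ≤ Cov.det :=
  det_fisher_le_det_cov_nonfaithful_general n N lam hpos A hA m hm ρ hρ A₀ hA₀ Cov hCov G hG
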